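/- Let μ be a nontrivial symmetric weakly stable probability measure on ℝ, let λ be μ-weakly infinitely divisible, let {λ^r : r ≥ 0} be a convolution semigroup family for (μ,λ), and let t_n ↘ 0. Then the sequence of finite measures (t_n^{−1} λ^{t_n}) is tight outside every open neighborhood of zero: for every ε > 0 there exists k > 0 such that t_n^{−1} λ^{t_n}({s : |s| > k}) < ε for all n. -/

import Mathlib

open MeasureTheory Filter Topology ENNReal BoundedContinuousFunction

noncomputable section

/-- `T_c μ`: pushforward of `μ` under `x ↦ c * x`. -/
def rescale (c : ℝ) (μ : Measure ℝ) : Measure ℝ := μ.map (fun x => c * x)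

/-- Scale mixture `μ ∘ ν`: pushforward of `μ × ν` under `(x, s) ↦ x * s`. -/
def mix (μ ν : Measure ℝ) : Measure ℝ := (μ.prod ν).map (fun p => p.1 * p.2)

/-- Convolution of two measures on `ℝ`. -/
def mconv (μ ν : Measure ℝ) : Measure ℝ := (μ.prod ν).map (fun p => p.1 + p.2)

/-- `n`-fold convolution power, with the convention that the 0th power is `δ_0`. -/
def convPow (μ : Measure ℝ) : ℕ → Measure ℝ
  | 0 => Measure.dirac 0
  | n + 1 => mconv (convPow μ n) μ

/-- A probability measure `μ` on `ℝ` is weakly stable if for all `a b : ℝ` there is a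
probability measure `lam` with `(T_a μ) ∗ (T_b μ) = μ ∘ lam`. -/
def WeaklyStable (μ : Measure ℝ) : Prop :=
  ∀ a b : ℝ, ∃ lam : Measure ℝ, IsProbabilityMeasure lam ∧
    mconv (rescale a μ) (rescale b μ) = mix μ lam

/-- `μ` is nontrivial: it has no atoms. -/
def NontrivialMeasure (μ : Measure ℝ) : Prop := ∀ x : ℝ, μ {x} = 0

/-- `μ` is symmetric: `T_{-1} μ = μ`. -/
def SymmetricMeasure (μ : Measure ℝ) : Prop := rescale (-1) μ = μ

/-- `lam` is `μ`-weakly infinitely divisible: for every `n ≥ 1` there is a probability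
measure `ν` concentrated on `[0, ∞)` with `(μ ∘ ν)^{∗ n} = μ ∘ lam`. -/
def MuWeaklyInfDiv (μ lam : Measure ℝ) : Prop :=
  ∀ n : ℕ, 1 ≤ n → ∃ ν : Measure ℝ, IsProbabilityMeasure ν ∧ ν (Set.Iio 0) = 0 ∧
    convPow (mix μ ν) n = mix μ lam

/-- Characteristic function of a measure on `ℝ`. -/
def charFun' (μ : Measure ℝ) (t : ℝ) : ℂ := ∫ x, Complex.exp (t * x * Complex.I) ∂μ

/-- Weak convergence of a sequence of measures on `ℝ`. -/
def WeakTendsto (μs : ℕ → Measure ℝ) (μ : Measure ℝ) : Prop :=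
  ∀ f : ℝ →ᵇ ℝ, Tendsto (fun n => ∫ x, f x ∂(μs n)) atTop (𝓝 (∫ x, f x ∂μ))

/-- A convolution semigroup family for `(μ, lam)`. -/
def ConvSemigroupFamily (μ lam : Measure ℝ) (L : ℝ → Measure ℝ) : Prop :=
  (∀ r : ℝ, 0 ≤ r → IsProbabilityMeasure (L r)) ∧
  L 0 = Measure.dirac 0 ∧ L 1 = lam ∧
  (∀ r s : ℝ, 0 ≤ r → 0 ≤ s → mconv (mix μ (L r)) (mix μ (L s)) = mix μ (L (r + s))) ∧
  (∀ f : ℝ →ᵇ ℝ, Tendsto (fun r => ∫ x, f x ∂(L r)) (𝓝[>] (0 : ℝ)) (𝓝 (f 0)))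

/-- `C_#`: bounded continuous functions vanishing on a neighborhood of `0`. -/
def CSharp (f : ℝ →ᵇ ℝ) : Prop := ∃ ε > (0 : ℝ), ∀ x : ℝ, |x| < ε → f x = 0

/-- `κ(μ) = sup {p ∈ [0,2] : ∫ |x|^p μ(dx) < ∞}` (with `sup ∅ = 0` in `ℝ`). -/
def kappa (μ : Measure ℝ) : ℝ :=
  sSup {p : ℝ | p ∈ Set.Icc (0 : ℝ) 2 ∧ ∫⁻ x, ENNReal.ofReal (|x| ^ p) ∂μ < ∞}

/-
Since `μ` has no atom at `0`, it puts mass `≥ 1/2` outside some `(-δ, δ)`, so the tail of `L r`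
beyond `k` is at most twice the tail of `μ ∘ L r` beyond `δ k`. For a symmetric law `ν` with
`p = ν {|y| > K}` a Lévy-type inequality gives `1 - (1 - p) ^ n ≤ 2 ν^{∗n} {|y| > K}`. Take
`ν = μ ∘ L r` and `n = ⌈1/r⌉`: then `ν^{∗n} = μ ∘ L (n r)` with `n r ∈ [1, 2]`, and convolving with
the symmetric `μ ∘ L (1 - u)` shows that tails of `μ ∘ L u`, `u ≤ 1`, are at most twice those of
`μ ∘ L 1`. Hence `p ≤ 12 r (μ ∘ L 1) {|y| > K / 2}` once the right side is small, uniformly in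
`r ≤ 1`; the finitely many `t n > 1` are handled one at a time.
-/

instance isProbabilityMeasure_mconv (α β : Measure ℝ) [IsProbabilityMeasure α]
    [IsProbabilityMeasure β] : IsProbabilityMeasure (mconv α β) :=
  inferInstanceAs (IsProbabilityMeasure (α ∗ β))

instance isProbabilityMeasure_mix (μ ρ : Measure ℝ) [IsProbabilityMeasure μ]
    [IsProbabilityMeasure ρ] : IsProbabilityMeasure (mix μ ρ) :=
  Measure.isProbabilityMeasure_map (by fun_prop)

instance isProbabilityMeasure_convPow (ν : Measure ℝ) [IsProbabilityMeasure ν] (n : ℕ) :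
    IsProbabilityMeasure (convPow ν n) := by
  induction n with
  | zero => rw [convPow]; infer_instance
  | succ n ih => rw [convPow]; infer_instance

lemma mix_dirac_zero (μ : Measure ℝ) [IsProbabilityMeasure μ] :
    mix μ (Measure.dirac 0) = Measure.dirac 0 := by
  rw [mix, Measure.prod_dirac, Measure.map_map (by fun_prop) (by fun_prop)]
  simp [Function.comp_def]

lemma SymmetricMeasure.isNegInvariant {μ : Measure ℝ} (h : SymmetricMeasure μ) :
    μ.IsNegInvariant := by
  constructor
  simpa only [SymmetricMeasure, rescale, neg_one_mul, Measure.neg] using h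

instance isNegInvariant_mix (μ ρ : Measure ℝ) [SFinite μ] [SFinite ρ] [μ.IsNegInvariant] :
    (mix μ ρ).IsNegInvariant := by
  constructor
  have hcomm : (Neg.neg ∘ fun p : ℝ × ℝ => p.1 * p.2) =
      (fun p : ℝ × ℝ => p.1 * p.2) ∘ Prod.map Neg.neg id := by
    ext p; simp [neg_mul]
  rw [Measure.neg, mix, Measure.map_map (by fun_prop) (by fun_prop), hcomm,
    ← Measure.map_map (by fun_prop) (by fun_prop),
    ← Measure.map_prod_map _ _ (by fun_prop) measurable_id, Measure.map_neg_eq_self,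
    Measure.map_id]

lemma measurableSet_lt_abs (k : ℝ) : MeasurableSet {y : ℝ | k < |y|} :=
  measurableSet_lt measurable_const measurable_abs

lemma abs_le_abs_add_of_mul_nonneg {a b : ℝ} (h : 0 ≤ a * b) : |b| ≤ |a + b| := by
  rw [← sq_le_sq]; nlinarith [sq_nonneg a]

lemma measure_le_two_mul_measure_inter_mul_nonneg (ν : Measure ℝ) [ν.IsNegInvariant]
    {S : Set ℝ} (hS : ∀ y ∈ S, -y ∈ S) (a : ℝ) :
    ν S ≤ 2 * ν (S ∩ {y | 0 ≤ a * y}) := by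
  set T := S ∩ {y | 0 ≤ a * y}
  have hcover : S ⊆ T ∪ -T := by
    intro y hy
    rcases le_total 0 (a * y) with h | h
    · exact Or.inl ⟨hy, h⟩
    · exact Or.inr ⟨hS y hy, by simpa [mul_neg] using h⟩
  calc ν S ≤ ν (T ∪ -T) := measure_mono hcover
    _ ≤ ν T + ν (-T) := measure_union_le _ _
    _ = 2 * ν T := by rw [Measure.measure_neg, two_mul]

lemma mul_le_two_mul_prod_mul_nonneg (α ν : Measure ℝ) [SFinite ν] [ν.IsNegInvariant]
    {A S : Set ℝ} (hA : MeasurableSet A) (hS : MeasurableSet S) (hSneg : ∀ y ∈ S, -y ∈ S)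
    {g : ℝ → ℝ} (hg : Measurable g) :
    α A * ν S ≤ 2 * (α.prod ν) {q | q.1 ∈ A ∧ q.2 ∈ S ∧ 0 ≤ g q.1 * q.2} := by
  have hE : MeasurableSet {q : ℝ × ℝ | q.1 ∈ A ∧ q.2 ∈ S ∧ 0 ≤ g q.1 * q.2} :=
    (measurable_fst hA).inter ((measurable_snd hS).inter
      (measurableSet_le measurable_const ((hg.comp measurable_fst).mul measurable_snd)))
  rw [Measure.prod_apply hE, ← lintegral_const_mul' 2 _ ofNat_ne_top, mul_comm,
    ← lintegral_indicator_const hA]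
  refine lintegral_mono fun s => ?_
  by_cases hs : s ∈ A
  · simpa [hs, Set.indicator_of_mem, Set.preimage, Set.ofPred_and] using
      measure_le_two_mul_measure_inter_mul_nonneg ν hSneg (g s)
  · simp [hs]

lemma measure_abs_gt_le_two_mul_mconv (α β : Measure ℝ) [IsProbabilityMeasure β]
    [β.IsNegInvariant] (K : ℝ) :
    α {y | K < |y|} ≤ 2 * mconv α β {y | K < |y|} := by
  have h := mul_le_two_mul_prod_mul_nonneg α β (measurableSet_lt_abs K) MeasurableSet.univ
    (fun _ _ => trivial) measurable_id
  rw [measure_univ, mul_one] at h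
  refine h.trans (mul_le_mul_right ?_ 2)
  rw [mconv, Measure.map_apply (by fun_prop) (measurableSet_lt_abs K)]
  refine measure_mono fun q ⟨hq, _, hmul⟩ => ?_
  have := abs_le_abs_add_of_mul_nonneg (a := q.2) (b := q.1) (by rwa [mul_comm])
  rw [add_comm] at this
  exact hq.trans_le this

lemma mconv_abs_gt_add_le (α β : Measure ℝ) [IsProbabilityMeasure α] [IsProbabilityMeasure β]
    (K₁ K₂ : ℝ) :
    mconv α β {y | K₁ + K₂ < |y|} ≤ α {y | K₁ < |y|} + β {y | K₂ < |y|} := by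
  rw [mconv, Measure.map_apply (by fun_prop) (measurableSet_lt_abs _)]
  have hcover : (fun p : ℝ × ℝ => p.1 + p.2) ⁻¹' {y | K₁ + K₂ < |y|} ⊆
      {y | K₁ < |y|} ×ˢ Set.univ ∪ Set.univ ×ˢ {y | K₂ < |y|} := by
    rintro ⟨s, y⟩ (h : K₁ + K₂ < |s + y|)
    rcases lt_or_ge K₁ |s| with hs | hs
    · exact Or.inl ⟨hs, trivial⟩
    · exact Or.inr ⟨trivial, (by linarith [abs_add_le s y] : K₂ < |y|)⟩
  calc (α.prod β) _ ≤ (α.prod β) _ := measure_mono hcover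
    _ ≤ _ := measure_union_le _ _
    _ = _ := by simp [Measure.prod_prod]

lemma measure_mul_measure_abs_gt_le_mix (μ ρ : Measure ℝ) [SFinite ρ] {δ k : ℝ} (hδ : 0 < δ) :
    μ {x | δ < |x|} * ρ {s | k < |s|} ≤ mix μ ρ {y | δ * k < |y|} := by
  rw [mix, Measure.map_apply (by fun_prop) (measurableSet_lt_abs _), ← Measure.prod_prod]
  refine measure_mono fun q ⟨hx, hs⟩ => ?_
  simp only [Set.mem_ofPred_eq, Set.mem_preimage, abs_mul] at hx hs ⊢
  calc δ * k < δ * |q.2| := by gcongr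
    _ ≤ |q.1| * |q.2| := by gcongr

lemma one_le_mul_add_two_mul_mconv_abs_gt (α ν : Measure ℝ) [IsProbabilityMeasure α]
    [IsProbabilityMeasure ν] [ν.IsNegInvariant] {K : ℝ} {a : ℝ≥0∞}
    (h : ∀ x, 1 ≤ a + 2 * α {s | K < |x + s|}) (x : ℝ) :
    1 ≤ a * (1 - ν {y | K < |y|}) + 2 * mconv α ν {s | K < |x + s|} := by
  -- A last step with `|y| > K` has the sign of `x + s` with probability `≥ 1/2` and then
  -- pushes the walk beyond `K`; after a last step with `|y| ≤ K`, `h` applies at `x + y`.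
  set p := ν {y | K < |y|}
  set B := {y : ℝ | |y| ≤ K}
  have hBm : MeasurableSet B := measurableSet_le measurable_abs measurable_const
  have hνB : ν B = 1 - p := by
    rw [← prob_compl_eq_one_sub (measurableSet_lt_abs K)]
    congr 1; ext y; simp [B]
  set E1 := {q : ℝ × ℝ | q.1 ∈ Set.univ ∧ q.2 ∈ {y | K < |y|} ∧ 0 ≤ (x + q.1) * q.2}
  set E2 := {q : ℝ × ℝ | q.2 ∈ B ∧ K < |x + q.2 + q.1|}
  have hE2m : MeasurableSet E2 :=
    (measurable_snd hBm).inter (measurableSet_lt measurable_const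
      ((measurable_const.add measurable_snd).add measurable_fst).abs)
  have hE1 : p ≤ 2 * (α.prod ν) E1 := by
    have h := mul_le_two_mul_prod_mul_nonneg α ν MeasurableSet.univ
      (measurableSet_lt_abs K) (fun y hy => by simpa using hy) (measurable_const_add x)
    rwa [measure_univ, one_mul] at h
  have hE2 : ν B ≤ a * ν B + 2 * (α.prod ν) E2 := by
    have hslice : (α.prod ν) E2 = ∫⁻ y in B, α {s | K < |x + y + s|} ∂ν := by
      rw [Measure.prod_apply_symm hE2m, ← lintegral_indicator hBm]
      congr 1; ext y
      by_cases hy : y ∈ B <;> simp [E2, hy]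
    calc ν B = ∫⁻ _ in B, 1 ∂ν := by rw [setLIntegral_const, one_mul]
      _ ≤ ∫⁻ y in B, (a + 2 * α {s | K < |x + y + s|}) ∂ν := lintegral_mono fun y => h (x + y)
      _ = _ := by
        rw [lintegral_add_left measurable_const, setLIntegral_const,
          lintegral_const_mul' 2 _ ofNat_ne_top, hslice]
  have hdisj : Disjoint E1 E2 := by
    rw [Set.disjoint_left]
    rintro q ⟨-, h1, -⟩ ⟨h2, -⟩
    exact not_lt.2 (show |q.2| ≤ K from h2) h1
  have hsub : E1 ∪ E2 ⊆ (fun q : ℝ × ℝ => q.1 + q.2) ⁻¹' {s | K < |x + s|} := by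
    rintro ⟨s, y⟩ (⟨-, hy, hmul⟩ | ⟨-, hy⟩)
    · have := abs_le_abs_add_of_mul_nonneg hmul
      simp only [Set.mem_preimage, Set.mem_ofPred_eq, ← add_assoc]
      exact hy.trans_le this
    · simpa [add_assoc, add_comm s y] using hy
  calc 1 = p + ν B := by rw [hνB, add_tsub_cancel_of_le prob_le_one]
    _ ≤ 2 * (α.prod ν) E1 + (a * ν B + 2 * (α.prod ν) E2) := add_le_add hE1 hE2
    _ = a * (1 - p) + 2 * (α.prod ν) (E1 ∪ E2) := by
      rw [measure_union hdisj hE2m, hνB]; ring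
    _ ≤ _ := by
      rw [mconv, Measure.map_apply (by fun_prop)
        (measurableSet_lt measurable_const (by fun_prop))]
      gcongr

lemma one_le_pow_add_two_mul_convPow_abs_gt (ν : Measure ℝ) [IsProbabilityMeasure ν]
    [ν.IsNegInvariant] (K : ℝ) (n : ℕ) (x : ℝ) :
    1 ≤ (1 - ν {y | K < |y|}) ^ n + 2 * convPow ν n {s | K < |x + s|} := by
  induction n generalizing x with
  | zero => simp
  | succ n ih =>
    rw [convPow, pow_succ]
    exact one_le_mul_add_two_mul_mconv_abs_gt _ ν ih x

lemma nat_mul_pow_mul_one_sub_le (n : ℕ) {x : ℝ} (h0 : 0 ≤ x) (h1 : x ≤ 1) :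
    n * x ^ n * (1 - x) ≤ 1 - x ^ n := by
  induction n with
  | zero => simp
  | succ n ih =>
    have hpow : x ^ n * x ≤ 1 := by rw [← pow_succ]; exact pow_le_one₀ h0 h1
    have h2 : x * (n * x ^ n * (1 - x)) ≤ x * (1 - x ^ n) := mul_le_mul_of_nonneg_left ih h0
    have h3 : x ^ n * x * (1 - x) ≤ 1 * (1 - x) := mul_le_mul_of_nonneg_right hpow (by linarith)
    push_cast
    rw [pow_succ]
    nlinarith

lemma nat_mul_le_two_mul_of_one_le_pow_add {p c : ℝ≥0∞} {n : ℕ} (hp : p ≤ 1) (hc : 2 * c ≤ 1)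
    (h : 1 ≤ (1 - p) ^ n + c) : n * p ≤ 2 * c := by
  have hp' : p ≠ ⊤ := ne_top_of_le_ne_top one_ne_top hp
  have hc' : c ≠ ⊤ := by rintro rfl; simp at hc
  have hP1 : p.toReal ≤ 1 := by simpa using ENNReal.toReal_mono one_ne_top hp
  have hC : 2 * c.toReal ≤ 1 := by simpa using ENNReal.toReal_mono one_ne_top hc
  have hreal : 1 ≤ (1 - p.toReal) ^ n + c.toReal := by
    have := ENNReal.toReal_mono (by finiteness) h
    rwa [toReal_add (by finiteness) hc', toReal_pow, toReal_sub_of_le hp one_ne_top,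
      toReal_one] at this
  have hbern := nat_mul_pow_mul_one_sub_le n (x := 1 - p.toReal) (by linarith) (by simp)
  rw [← ENNReal.toReal_le_toReal (by finiteness) (by finiteness)]
  simp only [toReal_mul, toReal_natCast, toReal_ofNat] at hbern ⊢
  nlinarith [mul_nonneg n.cast_nonneg (toReal_nonneg (a := p))]

lemma exists_pos_lt_measure_abs_gt (μ : Measure ℝ) {c : ℝ≥0∞} (hc : c < μ {0}ᶜ) :
    ∃ δ > 0, c < μ {x | δ < |x|} := by
  have hmono : Monotone fun n : ℕ => {x : ℝ | 1 / ((n : ℝ) + 1) < |x|} :=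
    fun a b hab x (hx : 1 / ((a : ℝ) + 1) < |x|) =>
      lt_of_le_of_lt (one_div_le_one_div_of_le (by positivity) (by gcongr)) hx
  have hU : ⋃ n : ℕ, {x : ℝ | 1 / ((n : ℝ) + 1) < |x|} = {0}ᶜ := by
    ext x
    simp only [Set.mem_iUnion, Set.mem_ofPred_eq, Set.mem_compl_iff, Set.mem_singleton_iff]
    constructor
    · rintro ⟨n, hn⟩ rfl
      simp only [abs_zero] at hn
      linarith [show (0 : ℝ) < 1 / ((n : ℝ) + 1) by positivity]
    · intro hx
      obtain ⟨n, hn⟩ := exists_nat_one_div_lt (abs_pos.2 hx)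
      exact ⟨n, hn⟩
  rw [← hU] at hc
  obtain ⟨n, hn⟩ := ((tendsto_measure_iUnion_atTop hmono).eventually_const_lt hc).exists
  exact ⟨1 / ((n : ℝ) + 1), by positivity, hn⟩

lemma tendsto_measure_abs_gt_atTop (m : Measure ℝ) [IsFiniteMeasure m] :
    Tendsto (fun k : ℝ => m {y | k < |y|}) atTop (𝓝 0) := by
  simpa using tendsto_measure_norm_gt_of_isTightMeasureSet (isTightMeasureSet_singleton (μ := m))

section Semigroup

variable {μ : Measure ℝ} [IsProbabilityMeasure μ] {L : ℝ → Measure ℝ}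

lemma convPow_mix_eq (h0 : L 0 = Measure.dirac 0)
    (hadd : ∀ r s : ℝ, 0 ≤ r → 0 ≤ s → mconv (mix μ (L r)) (mix μ (L s)) = mix μ (L (r + s)))
    {r : ℝ} (hr : 0 ≤ r) (n : ℕ) : convPow (mix μ (L r)) n = mix μ (L (n * r)) := by
  induction n with
  | zero => rw [convPow, Nat.cast_zero, zero_mul, h0, mix_dirac_zero]
  | succ n ih => rw [convPow, ih, hadd _ _ (by positivity) hr, Nat.cast_succ, add_one_mul]

variable [μ.IsNegInvariant]

lemma mix_abs_gt_le_two_mul_mix_one (hprob : ∀ r : ℝ, 0 ≤ r → IsProbabilityMeasure (L r))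
    (hadd : ∀ r s : ℝ, 0 ≤ r → 0 ≤ s → mconv (mix μ (L r)) (mix μ (L s)) = mix μ (L (r + s)))
    {u : ℝ} (hu0 : 0 ≤ u) (hu1 : u ≤ 1) (K : ℝ) :
    mix μ (L u) {y | K < |y|} ≤ 2 * mix μ (L 1) {y | K < |y|} := by
  have := hprob (1 - u) (by linarith)
  have h := measure_abs_gt_le_two_mul_mconv (mix μ (L u)) (mix μ (L (1 - u))) K
  rwa [hadd u (1 - u) hu0 (by linarith), add_sub_cancel] at h

lemma nat_mul_mix_abs_gt_le (hprob : ∀ r : ℝ, 0 ≤ r → IsProbabilityMeasure (L r))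
    (h0 : L 0 = Measure.dirac 0)
    (hadd : ∀ r s : ℝ, 0 ≤ r → 0 ≤ s → mconv (mix μ (L r)) (mix μ (L s)) = mix μ (L (r + s)))
    {r : ℝ} (hr0 : 0 < r) (hr1 : r ≤ 1) {K : ℝ} (hK : 12 * mix μ (L 1) {y | K < |y|} ≤ 1) :
    ⌈r⁻¹⌉₊ * mix μ (L r) {y | K + K < |y|} ≤ 12 * mix μ (L 1) {y | K < |y|} := by
  have hs1 : 1 ≤ (⌈r⁻¹⌉₊ : ℝ) * r :=
    calc 1 = r⁻¹ * r := (inv_mul_cancel₀ hr0.ne').symm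
      _ ≤ _ := by gcongr; exact Nat.le_ceil _
  have hs2 : (⌈r⁻¹⌉₊ : ℝ) * r ≤ 2 := by
    have := Nat.ceil_lt_add_one (inv_pos.2 hr0).le
    calc (⌈r⁻¹⌉₊ : ℝ) * r ≤ (r⁻¹ + 1) * r := by gcongr
      _ = 1 + r := by field_simp
      _ ≤ 2 := by linarith
  set q := mix μ (L 1) {y | K < |y|}
  set s := (⌈r⁻¹⌉₊ : ℝ) * r
  have := hprob 1 zero_le_one
  have := hprob r hr0.le
  have := hprob (s - 1) (by linarith)
  have htail : mix μ (L s) {y | K + K < |y|} ≤ 3 * q := by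
    calc mix μ (L s) {y | K + K < |y|}
        = mconv (mix μ (L 1)) (mix μ (L (s - 1))) {y | K + K < |y|} := by
          rw [hadd 1 (s - 1) zero_le_one (by linarith), add_sub_cancel]
      _ ≤ q + mix μ (L (s - 1)) {y | K < |y|} := mconv_abs_gt_add_le _ _ K K
      _ ≤ q + 2 * q := by
          gcongr; exact mix_abs_gt_le_two_mul_mix_one hprob hadd (by linarith) (by linarith) K
      _ = 3 * q := by ring
  have hlevy := one_le_pow_add_two_mul_convPow_abs_gt (mix μ (L r)) (K + K) ⌈r⁻¹⌉₊ 0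
  simp only [zero_add, convPow_mix_eq h0 hadd hr0.le] at hlevy
  have hq : 2 * (2 * (3 * q)) = 12 * q := by ring
  calc _ ≤ 2 * (2 * (3 * q)) :=
        nat_mul_le_two_mul_of_one_le_pow_add prob_le_one (hq.trans_le hK) (hlevy.trans (by gcongr))
    _ = 12 * q := hq

lemma measure_abs_gt_le_mul_mix_one (hprob : ∀ r : ℝ, 0 ≤ r → IsProbabilityMeasure (L r))
    (h0 : L 0 = Measure.dirac 0)
    (hadd : ∀ r s : ℝ, 0 ≤ r → 0 ≤ s → mconv (mix μ (L r)) (mix μ (L s)) = mix μ (L (r + s)))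
    {δ k K r : ℝ} (hδ : 0 < δ) (hμδ : 1 ≤ 2 * μ {x | δ < |x|}) (hk : K + K ≤ δ * k)
    (hr0 : 0 < r) (hr1 : r ≤ 1) (hK : 12 * mix μ (L 1) {y | K < |y|} ≤ 1) :
    L r {s | k < |s|} ≤ 24 * mix μ (L 1) {y | K < |y|} * ENNReal.ofReal r := by
  set p := mix μ (L r) {y | K + K < |y|}
  have := hprob r hr0.le
  have hL : L r {s | k < |s|} ≤ 2 * p :=
    calc L r {s | k < |s|} ≤ 2 * μ {x | δ < |x|} * L r {s | k < |s|} := le_mul_of_one_le_left' hμδ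
      _ ≤ 2 * mix μ (L r) {y | δ * k < |y|} := by
          rw [mul_assoc]; gcongr; exact measure_mul_measure_abs_gt_le_mix μ (L r) hδ
      _ ≤ 2 * p := mul_le_mul_right (measure_mono fun y (hy : δ * k < |y|) =>
          (show K + K < |y| by linarith)) 2
  have hceil : 1 ≤ (⌈r⁻¹⌉₊ : ℝ≥0∞) * ENNReal.ofReal r := by
    rw [← ENNReal.ofReal_natCast, ← ENNReal.ofReal_mul (by positivity)]
    exact ENNReal.one_le_ofReal.2 ((inv_mul_cancel₀ hr0.ne').symm.le.trans
      (by gcongr; exact Nat.le_ceil _))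
  calc L r {s | k < |s|} ≤ 2 * (⌈r⁻¹⌉₊ * ENNReal.ofReal r * p) :=
        hL.trans (mul_le_mul_right (le_mul_of_one_le_left' hceil) 2)
    _ = 2 * (⌈r⁻¹⌉₊ * p) * ENNReal.ofReal r := by ring
    _ ≤ 2 * (12 * mix μ (L 1) {y | K < |y|}) * ENNReal.ofReal r :=
        mul_le_mul_left (mul_le_mul_right (nat_mul_mix_abs_gt_le hprob h0 hadd hr0 hr1 hK) 2) _
    _ = _ := by ring

lemma eventually_measure_abs_gt_lt_mul (hμ0 : μ {0} = 0)
    (hprob : ∀ r : ℝ, 0 ≤ r → IsProbabilityMeasure (L r)) (h0 : L 0 = Measure.dirac 0)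
    (hadd : ∀ r s : ℝ, 0 ≤ r → 0 ≤ s → mconv (mix μ (L r)) (mix μ (L s)) = mix μ (L (r + s)))
    {ε : ℝ} (hε : 0 < ε) :
    ∀ᶠ k in atTop, ∀ r : ℝ, 0 < r → r ≤ 1 →
      L r {s | k < |s|} < ENNReal.ofReal ε * ENNReal.ofReal r := by
  have := hprob 1 zero_le_one
  obtain ⟨δ, hδ, hμδ⟩ := exists_pos_lt_measure_abs_gt μ (c := 2⁻¹) (by
    rw [prob_compl_eq_one_sub (measurableSet_singleton 0), hμ0, tsub_zero]
    exact ENNReal.inv_lt_one.2 one_lt_two)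
  have hμδ' : 1 ≤ 2 * μ {x | δ < |x|} :=
    (ENNReal.mul_inv_cancel two_ne_zero ofNat_ne_top).symm.le.trans (mul_le_mul_right hμδ.le 2)
  set q := fun K : ℝ => mix μ (L 1) {y | K < |y|}
  have hq : Tendsto (fun K => 24 * q K) atTop (𝓝 0) := by
    simpa using ENNReal.Tendsto.const_mul (tendsto_measure_abs_gt_atTop (mix μ (L 1)))
      (Or.inr ofNat_ne_top)
  obtain ⟨K, hK⟩ := (hq.eventually_lt_const (lt_min (ofReal_pos.2 hε) one_pos)).exists
  have hK12 : 12 * q K ≤ 1 := calc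
    12 * q K ≤ 24 * q K := by gcongr; norm_num
    _ ≤ 1 := (hK.trans_le (min_le_right _ _)).le
  filter_upwards [eventually_ge_atTop ((K + K) / δ)] with k hk r hr0 hr1
  calc _ ≤ 24 * q K * ENNReal.ofReal r :=
        measure_abs_gt_le_mul_mix_one hprob h0 hadd hδ hμδ' ((div_le_iff₀' hδ).1 hk) hr0 hr1 hK12
    _ < ENNReal.ofReal ε * ENNReal.ofReal r :=
        ENNReal.mul_lt_mul_left (ofReal_pos.2 hr0).ne' ofReal_ne_top
          (hK.trans_le (min_le_left _ _))

end Semigroup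

theorem stmt12_general (μ lam : Measure ℝ)
    (hμ : IsProbabilityMeasure μ) (hnt : NontrivialMeasure μ)
    (hsym : SymmetricMeasure μ)
    (L : ℝ → Measure ℝ) (hL : ConvSemigroupFamily μ lam L)
    (t : ℕ → ℝ) (htpos : ∀ n, 0 < t n)
    (ht0 : Tendsto t atTop (𝓝 0)) :
    ∀ ε : ℝ, 0 < ε → ∃ k : ℝ, 0 < k ∧ ∀ n : ℕ,
      (L (t n)) {s : ℝ | k < |s|} / ENNReal.ofReal (t n) < ENNReal.ofReal ε := by
  obtain ⟨hprob, h0, -, hadd, -⟩ := hL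
  have := hsym.isNegInvariant
  intro ε hε
  obtain ⟨N, hN⟩ := eventually_atTop.1 (ht0.eventually (ge_mem_nhds one_pos))
  have hfirst : ∀ᶠ k in atTop, ∀ n ∈ Finset.range N,
      L (t n) {s | k < |s|} < ENNReal.ofReal ε * ENNReal.ofReal (t n) := by
    refine (Finset.eventually_all _).2 fun n _ => ?_
    have := hprob (t n) (htpos n).le
    exact (tendsto_measure_abs_gt_atTop _).eventually_lt_const
      (ENNReal.mul_pos (ofReal_pos.2 hε).ne' (ofReal_pos.2 (htpos n)).ne')
  obtain ⟨k, hk0, hkfirst, hkrest⟩ := ((eventually_gt_atTop 0).and (hfirst.and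
    (eventually_measure_abs_gt_lt_mul (hnt 0) hprob h0 hadd hε))).exists
  refine ⟨k, hk0, fun n => ?_⟩
  rw [ENNReal.div_lt_iff (Or.inl (ofReal_pos.2 (htpos n)).ne') (Or.inl ofReal_ne_top)]
  rcases lt_or_ge n N with hn | hn
  · exact hkfirst n (Finset.mem_range.2 hn)
  · exact hkrest (t n) (htpos n) (hN n hn)

theorem stmt12 (μ lam : Measure ℝ)
    (hμ : IsProbabilityMeasure μ) (hnt : NontrivialMeasure μ)
    (hsym : SymmetricMeasure μ) (hws : WeaklyStable μ)
    (hlam : IsProbabilityMeasure lam) (hdiv : MuWeaklyInfDiv μ lam)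
    (L : ℝ → Measure ℝ) (hL : ConvSemigroupFamily μ lam L)
    (t : ℕ → ℝ) (htpos : ∀ n, 0 < t n) (htanti : StrictAnti t)
    (ht0 : Tendsto t atTop (𝓝 0)) :
    ∀ ε : ℝ, 0 < ε → ∃ k : ℝ, 0 < k ∧ ∀ n : ℕ,
      (L (t n)) {s : ℝ | k < |s|} / ENNReal.ofReal (t n) < ENNReal.ofReal ε :=
  stmt12_general μ lam hμ hnt hsym L hL t htpos ht0
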